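/- arXiv:2506.23198 — 5 statements merged into one kernel-verified Lean document; each statement's English description precedes it below -/
import Mathlib

section
/- Welch bound: Let N ≥ K ≥ 1 and let c_0, …, c_{N−1} be unit-norm vectors in ℂ^K. Then max_{l ≠ k} |⟨c_l, c_k⟩| ≥ sqrt((N−K)/(K(N−1))), where ⟨c_l, c_k⟩ = c_l c_k^H is the Hermitian inner product. -/
/-!
Welch's argument: the frame operator `S = ∑ l, c_l c_lᴴ` of the codebook has trace `N`, and its
squared Frobenius norm is the frame potential `∑ l, ∑ k, |⟨c_l, c_k⟩|²`. Cauchy–Schwarz on the `K`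
diagonal entries of `S` gives `N² ≤ K · ∑ l, ∑ k, |⟨c_l, c_k⟩|²`. The `N` diagonal terms equal `1`,
so the `N(N - 1)` off-diagonal terms sum to at least `N(N - K)/K`, and the largest of them is at
least their average `(N - K)/(K(N - 1))`.
-/

open Complex Finset

open scoped InnerProductSpace

theorem Matrix.norm_trace_sq_le_card_mul_sum_norm_sq {n 𝕜 : Type*} [Fintype n] [RCLike 𝕜]
    (A : Matrix n n 𝕜) :
    ‖A.trace‖ ^ 2 ≤ Fintype.card n * ∑ i, ∑ j, ‖A i j‖ ^ 2 :=
  calc ‖A.trace‖ ^ 2 ≤ (∑ i, ‖A i i‖) ^ 2 := by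
        gcongr
        exact norm_sum_le _ _
    _ ≤ Fintype.card n * ∑ i, ‖A i i‖ ^ 2 := sq_sum_le_card_mul_sum_sq
    _ ≤ Fintype.card n * ∑ i, ∑ j, ‖A i j‖ ^ 2 := by
        gcongr with i
        exact single_le_sum (f := fun j => ‖A i j‖ ^ 2) (fun _ _ => by positivity) (mem_univ i)

theorem Finset.sum_sum_eq_sum_diag_add_sum_offDiag {ι M : Type*} [Fintype ι] [DecidableEq ι]
    [AddCommMonoid M] (f : ι → ι → M) :
    ∑ i, ∑ j, f i j = ∑ i, f i i + ∑ p ∈ univ.offDiag, f p.1 p.2 := by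
  rw [← sum_diag univ (fun p => f p.1 p.2), ← sum_union (disjoint_diag_offDiag _),
    diag_union_offDiag, sum_product]

theorem Finset.exists_ne_sum_offDiag_div_le {ι : Type*} [Fintype ι] [DecidableEq ι]
    [Nontrivial ι] (f : ι → ι → ℝ) :
    ∃ l k, l ≠ k ∧
      (∑ p ∈ univ.offDiag, f p.1 p.2) / (Fintype.card ι * (Fintype.card ι - 1)) ≤ f l k := by
  have hcard : ((univ : Finset ι).offDiag.card : ℝ) = Fintype.card ι * (Fintype.card ι - 1) := by
    rw [offDiag_card, card_univ, Nat.cast_sub (Nat.le_mul_self _)]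
    push_cast
    ring
  have hpos : (0 : ℝ) < Fintype.card ι * (Fintype.card ι - 1) := by
    have : (1 : ℝ) < Fintype.card ι := by exact_mod_cast Fintype.one_lt_card (α := ι)
    nlinarith
  have hne : (univ : Finset ι).offDiag.Nonempty := by
    rw [← card_pos, ← Nat.cast_pos (α := ℝ), hcard]
    exact hpos
  have hsum : ∑ _p ∈ (univ : Finset ι).offDiag, (∑ p ∈ univ.offDiag, f p.1 p.2) /
      (Fintype.card ι * (Fintype.card ι - 1)) ≤ ∑ p ∈ univ.offDiag, f p.1 p.2 := by
    rw [sum_const, nsmul_eq_mul, hcard, mul_div_cancel₀ _ hpos.ne']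
  obtain ⟨⟨l, k⟩, hlk, hle⟩ := exists_le_of_sum_le hne hsum
  exact ⟨l, k, (mem_offDiag.1 hlk).2.2, hle⟩

section FrameOperator

variable {𝕜 E ι κ : Type*} [RCLike 𝕜] [NormedAddCommGroup E] [InnerProductSpace 𝕜 E]
  [Fintype ι] [Fintype κ]

/-- The matrix, in the orthonormal basis `b`, of the frame operator `x ↦ ∑ l, ⟪v l, x⟫ • v l`. -/
noncomputable def frameMatrix (b : OrthonormalBasis κ 𝕜 E) (v : ι → E) : Matrix κ κ 𝕜 :=
  Matrix.of fun i j => ∑ l, ⟪b i, v l⟫_𝕜 * ⟪v l, b j⟫_𝕜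

theorem trace_frameMatrix (b : OrthonormalBasis κ 𝕜 E) (v : ι → E) :
    (frameMatrix b v).trace = ∑ l, ⟪v l, v l⟫_𝕜 := by
  simp only [Matrix.trace, Matrix.diag, frameMatrix, Matrix.of_apply]
  rw [sum_comm]
  refine sum_congr rfl fun l _ => ?_
  rw [← b.sum_inner_mul_inner]
  exact sum_congr rfl fun i _ => mul_comm _ _

theorem sum_norm_sq_frameMatrix (b : OrthonormalBasis κ 𝕜 E) (v : ι → E) :
    ∑ i, ∑ j, ‖frameMatrix b v i j‖ ^ 2 = ∑ l, ∑ k, ‖⟪v l, v k⟫_𝕜‖ ^ 2 := by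
  suffices h : ∑ i, ∑ j, frameMatrix b v i j * starRingEnd 𝕜 (frameMatrix b v i j)
      = ∑ l, ∑ k, ⟪v l, v k⟫_𝕜 * starRingEnd 𝕜 ⟪v l, v k⟫_𝕜 by
    simp only [RCLike.mul_conj] at h
    exact_mod_cast h
  conv_rhs =>
    enter [2, l, 2, k]
    rw [inner_conj_symm, ← b.sum_inner_mul_inner (v l) (v k), ← b.sum_inner_mul_inner (v k) (v l)]
  simp only [frameMatrix, Matrix.of_apply, map_sum, map_mul, inner_conj_symm, sum_mul_sum]
  -- both sides are now the same sum over `(i, j, l, k)`, taken in different orders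
  conv_lhs => enter [2, i]; rw [sum_comm]
  rw [sum_comm]
  conv_lhs => enter [2, l, 2, i]; rw [sum_comm]
  conv_lhs => enter [2, l]; rw [sum_comm]
  refine sum_congr rfl fun l _ => sum_congr rfl fun k _ => ?_
  rw [sum_comm]
  exact sum_congr rfl fun j _ => sum_congr rfl fun i _ => by ring

theorem sq_sum_norm_sq_le_finrank_mul_sum_norm_inner_sq [FiniteDimensional 𝕜 E] (v : ι → E) :
    (∑ l, ‖v l‖ ^ 2) ^ 2 ≤ Module.finrank 𝕜 E * ∑ l, ∑ k, ‖⟪v l, v k⟫_𝕜‖ ^ 2 := by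
  set b := stdOrthonormalBasis 𝕜 E
  have htrace : ‖(frameMatrix b v).trace‖ = ∑ l, ‖v l‖ ^ 2 := by
    simp only [trace_frameMatrix, inner_self_eq_norm_sq_to_K]
    norm_cast
    exact Real.norm_of_nonneg (by positivity)
  simpa [htrace, sum_norm_sq_frameMatrix] using
    (frameMatrix b v).norm_trace_sq_le_card_mul_sum_norm_sq

end FrameOperator

theorem welch_bound_general (N K : ℕ) (hN : 2 ≤ N)
    (c : Fin N → EuclideanSpace ℂ (Fin K))
    (hnorm : ∀ l, ‖c l‖ = 1) :
    ∃ l k : Fin N, l ≠ k ∧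
      Real.sqrt (((N : ℝ) - K) / (K * ((N : ℝ) - 1)))
        ≤ ‖(inner ℂ (c l) (c k) : ℂ)‖ := by
  set f : Fin N → Fin N → ℝ := fun l k => ‖(inner ℂ (c l) (c k) : ℂ)‖ ^ 2
  have hpotential : (N : ℝ) ^ 2 ≤ K * (N + ∑ p ∈ univ.offDiag, f p.1 p.2) := by
    have h := sq_sum_norm_sq_le_finrank_mul_sum_norm_inner_sq (𝕜 := ℂ) c
    simp only [hnorm, finrank_euclideanSpace, Fintype.card_fin,
      sum_sum_eq_sum_diag_add_sum_offDiag (fun l k => ‖(inner ℂ (c l) (c k) : ℂ)‖ ^ 2),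
      inner_self_eq_norm_sq_to_K] at h
    simpa using h
  have : Nontrivial (Fin N) := Fin.nontrivial_iff_two_le.2 hN
  obtain ⟨l, k, hlk, hle⟩ := exists_ne_sum_offDiag_div_le f
  refine ⟨l, k, hlk, (Real.sqrt_le_left (norm_nonneg _)).2 (le_trans ?_ hle)⟩
  simp only [Fintype.card_fin]
  have hK : (0 : ℝ) < K := by
    rcases Nat.eq_zero_or_pos K with rfl | hK
    · simp at hpotential
      omega
    · exact_mod_cast hK
  have hN1 : (1 : ℝ) < N := by exact_mod_cast hN
  rw [div_le_div_iff₀ (by positivity) (by positivity)]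
  nlinarith

/-- Welch bound: if `c_0, …, c_{N-1}` are unit-norm vectors in `ℂ^K` with
`N ≥ K ≥ 1` (and `N ≥ 2` so that a distinct pair exists), then the maximal
cross-correlation amplitude satisfies
`max_{l ≠ k} |⟨c_l, c_k⟩| ≥ sqrt((N - K)/(K(N - 1)))`. -/
theorem welch_bound (N K : ℕ) (hK : 1 ≤ K) (hKN : K ≤ N) (hN : 2 ≤ N)
    (c : Fin N → EuclideanSpace ℂ (Fin K))
    (hnorm : ∀ l, ‖c l‖ = 1) :
    ∃ l k : Fin N, l ≠ k ∧
      Real.sqrt (((N : ℝ) - K) / (K * ((N : ℝ) - 1)))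
        ≤ ‖(inner ℂ (c l) (c k) : ℂ)‖ :=
  welch_bound_general N K hN c hnorm
end

section
/- Let p be an odd prime and F: V → F_{p^m} a vectorial dual-bent function satisfying Condition I with sign ε ∈ {±1}, where V is an n-dimensional F_p-vector space with n even. Let N_1 = #{x ∈ V : F(x) is a nonzero square in F_{p^m}} and N_{−1} = #{x ∈ V : F(x) is a nonsquare}. Then N_1 = N_{−1} = (p^n − ε p^{n/2})(p^m − 1)/(2 p^m). -/
open Complex Finset

/-!
Evaluating the Walsh transform at `a = 0`, where `F^*(0) = 0`, gives
`∑ₓ ζ_p^{Tr(c F(x))} = ε p^{n/2}` for every `c ≠ 0`. Since `x ↦ ζ_p^{Tr(x)}` is a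
primitive additive character of `F_{p^m}`, orthogonality then shows that every nonzero `b`
has exactly `(p^n - ε p^{n/2}) / p^m` preimages under `F`. Hence `N_1` and `N_{-1}` are this
fibre size times the numbers of nonzero squares and of nonsquares of `F_{p^m}`, which are both
`(p^m - 1)/2`.
-/

/-- `ζ_p^k` for `k ∈ Z/p`. -/
noncomputable def zetaP (p : ℕ) (k : ZMod p) : ℂ :=
  Complex.exp (2 * Real.pi * Complex.I * (k.val : ℂ) / p)

theorem zetaP_eq_stdAddChar (p : ℕ) [NeZero p] (k : ZMod p) : zetaP p k = ZMod.stdAddChar k := by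
  rw [ZMod.stdAddChar_apply, ZMod.toCircle_apply, zetaP]

section TraceCharacter

variable (p : ℕ) [Fact p.Prime] (K : Type*) [Field K] [Algebra (ZMod p) K]

theorem Algebra.trace_zmod_ne_zero [Fintype K] : Algebra.trace (ZMod p) K ≠ 0 :=
  ((traceForm_nondegenerate_tfae (ZMod p) K).out 0 1).1
    (inferInstance : Algebra.IsSeparable (ZMod p) K)

noncomputable def traceAddChar : AddChar K ℂ :=
  ZMod.stdAddChar.compAddMonoidHom (Algebra.trace (ZMod p) K).toAddMonoidHom

theorem traceAddChar_apply (x : K) :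
    traceAddChar p K x = zetaP p (Algebra.trace (ZMod p) K x) :=
  (zetaP_eq_stdAddChar p _).symm

theorem isPrimitive_traceAddChar [Fintype K] : (traceAddChar p K).IsPrimitive := by
  refine AddChar.IsPrimitive.of_ne_one fun h => ?_
  obtain ⟨x, hx⟩ : ∃ x, Algebra.trace (ZMod p) K x ≠ 0 := by
    by_contra! h0
    exact Algebra.trace_zmod_ne_zero p K (LinearMap.ext h0)
  have h1 : ZMod.stdAddChar (Algebra.trace (ZMod p) K x) = 1 := DFunLike.congr_fun h x
  rw [← AddChar.map_zero_eq_one (ZMod.stdAddChar (N := p)),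
    ZMod.injective_stdAddChar.eq_iff] at h1
  exact hx h1

end TraceCharacter

theorem card_mul_card_fiber_eq_of_sum_eq {R R' V : Type*} [CommRing R] [Fintype R]
    [DecidableEq R] [CommRing R'] [IsDomain R'] [Fintype V] {ψ : AddChar R R'}
    (hψ : ψ.IsPrimitive) (F : V → R) (S : R') (hS : ∀ c ≠ 0, ∑ x, ψ (c * F x) = S)
    {b : R} (hb : b ≠ 0) :
    (Fintype.card R : R') * #{x | F x = b} = Fintype.card V - S := by
  set T : R → R' := fun c => ∑ x, ψ (c * F x)
  calc (Fintype.card R : R') * #{x | F x = b}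
      = ∑ x, ∑ c, ψ (c * (F x - b)) := by
        simp [AddChar.sum_mulShift _ hψ, sub_eq_zero, sum_ite, mul_comm]
    _ = ∑ c, T c * ψ (c * -b) := by
        rw [sum_comm]
        simp only [T, sum_mul, sub_eq_add_neg, mul_add, AddChar.map_add_eq_mul]
    _ = S * ∑ c, ψ (c * -b) + ∑ c, (T c - S) * ψ (c * -b) := by
        rw [mul_sum, ← sum_add_distrib]
        exact sum_congr rfl fun c _ => by ring
    _ = Fintype.card V - S := by
        rw [AddChar.sum_mulShift _ hψ, if_neg (neg_ne_zero.2 hb), Nat.cast_zero, mul_zero,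
          zero_add, sum_eq_single 0 (fun c _ hc => by simp only [T, hS c hc, sub_self, zero_mul])
            (fun h => absurd (mem_univ 0) h)]
        simp [T]

theorem card_filter_comp_eq_mul {V K : Type*} [Fintype V] [Fintype K] [DecidableEq K]
    (F : V → K) (P : K → Prop) [DecidablePred P] {N : ℕ}
    (hN : ∀ b, P b → #{x | F x = b} = N) :
    #{x | P (F x)} = #{b | P b} * N := by
  rw [card_eq_sum_card_fiberwise (f := F) (t := {b | P b}) (fun x hx => by simpa using hx),
    ← smul_eq_mul, ← sum_const]
  refine sum_congr rfl fun b hb => ?_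
  rw [mem_filter] at hb
  rw [← hN b hb.2, filter_filter]
  exact congrArg card (filter_congr fun x _ => ⟨And.right, fun h => ⟨h ▸ hb.2, h⟩⟩)

theorem card_nonzero_squares_add_card_nonsquares_add_one {M : Type*} [MulZeroClass M]
    [Fintype M] [DecidableEq M] :
    #{a : M | IsSquare a ∧ a ≠ 0} + #{a : M | ¬IsSquare a} + 1 = Fintype.card M := by
  have herase :
      ({a | IsSquare a ∧ a ≠ 0} : Finset M) = ({a | IsSquare a} : Finset M).erase 0 := by
    ext a
    simp [and_comm]
  rw [herase, add_right_comm, card_erase_add_one (by simp), card_filter_add_card_filter_not,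
    card_univ]

theorem card_nonzero_squares_eq_card_nonsquares {F : Type*} [Field F] [Fintype F]
    [DecidableEq F] (hF : ringChar F ≠ 2) :
    #{a : F | IsSquare a ∧ a ≠ 0} = #{a : F | ¬IsSquare a} := by
  have hχ : ∀ a : F, (quadraticChar F a : ℤ) =
      (if IsSquare a ∧ a ≠ 0 then 1 else 0) - (if ¬IsSquare a then 1 else 0) := by
    intro a
    by_cases h0 : a = 0
    · simp [h0]
    by_cases hs : IsSquare a
    · simp [h0, hs, (quadraticChar_one_iff_isSquare h0).mpr hs]
    · simp [hs, quadraticChar_neg_one_iff_not_isSquare.mpr hs]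
  have hsum := quadraticChar_sum_zero hF
  rw [sum_congr rfl fun a _ => hχ a, sum_sub_distrib, sum_boole, sum_boole, sub_eq_zero] at hsum
  exact_mod_cast hsum

theorem count_square_values_condI_general
    (p n m d : ℕ) [Fact p.Prime] (hp : p ≠ 2)
    (V : Type*) [AddCommGroup V] [Module (ZMod p) V] [Fintype V]
    (hV : Fintype.card V = p ^ n)
    (K : Type*) [Field K] [Fintype K] [DecidableEq K] [Algebra (ZMod p) K]
    (hK : Fintype.card K = p ^ m)
    (B : V →ₗ[ZMod p] V →ₗ[ZMod p] ZMod p)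
    (F Fstar : V → K)
    (ε : ℤ)
    (hFstar0 : Fstar 0 = 0)
    (hWalsh : ∀ c : K, c ≠ 0 → ∀ a : V,
      ∑ x : V, zetaP p (Algebra.trace (ZMod p) K (c * F x) - B a x)
        = (ε : ℂ) * (p : ℂ) ^ (n / 2)
            * zetaP p (Algebra.trace (ZMod p) K (c ^ ((1 : ℤ) - d) * Fstar a))) :
    (Finset.univ.filter (fun x : V => IsSquare (F x) ∧ F x ≠ 0)).card
      = (Finset.univ.filter (fun x : V => ¬ IsSquare (F x))).card
    ∧ (2 * (p : ℤ) ^ m *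
        ((Finset.univ.filter (fun x : V => IsSquare (F x) ∧ F x ≠ 0)).card : ℤ)
      = ((p : ℤ) ^ n - ε * (p : ℤ) ^ (n / 2)) * ((p : ℤ) ^ m - 1)) := by
  have hchar : ringChar K ≠ 2 := by
    have : CharP K p := charP_of_injective_algebraMap' (ZMod p) p
    rwa [ringChar.eq K p]
  have hsum : ∀ c ≠ 0, ∑ x, traceAddChar p K (c * F x) = ε * (p : ℂ) ^ (n / 2) := by
    intro c hc
    simpa [traceAddChar_apply, hFstar0, zetaP_eq_stdAddChar] using hWalsh c hc 0
  have hfiber_mul : ∀ b ≠ 0, (p : ℂ) ^ m * #{x | F x = b} = p ^ n - ε * p ^ (n / 2) := by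
    intro b hb
    simpa [hK, hV] using
      card_mul_card_fiber_eq_of_sum_eq (isPrimitive_traceAddChar p K) F _ hsum hb
  have hpm : (p : ℂ) ^ m ≠ 0 := pow_ne_zero _ (Nat.cast_ne_zero.2 (Fact.out : p.Prime).ne_zero)
  have hfiber : ∀ b ≠ 0, #{x | F x = b} = #{x | F x = 1} := fun b hb => by
    exact_mod_cast mul_left_cancel₀ hpm ((hfiber_mul b hb).trans (hfiber_mul 1 one_ne_zero).symm)
  have hN : (p : ℤ) ^ m * #{x | F x = 1} = p ^ n - ε * p ^ (n / 2) := by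
    exact_mod_cast hfiber_mul 1 one_ne_zero
  have hsq := card_filter_comp_eq_mul F (fun b => IsSquare b ∧ b ≠ 0) fun b hb => hfiber b hb.2
  have hnsq := card_filter_comp_eq_mul F (fun b => ¬IsSquare b) fun b hb =>
    hfiber b fun h => hb (h ▸ IsSquare.zero)
  have hcard : (2 * #{b : K | IsSquare b ∧ b ≠ 0} + 1 : ℤ) = p ^ m := by
    have := card_nonzero_squares_add_card_nonsquares_add_one (M := K)
    rw [← card_nonzero_squares_eq_card_nonsquares hchar, hK] at this
    exact_mod_cast (by omega : 2 * #{b : K | IsSquare b ∧ b ≠ 0} + 1 = p ^ m)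
  refine ⟨by rw [hsq, hnsq, card_nonzero_squares_eq_card_nonsquares hchar], ?_⟩
  rw [hsq]
  push_cast
  linear_combination (2 * (#{b : K | IsSquare b ∧ b ≠ 0} : ℤ)) * hN
    + ((p : ℤ) ^ n - ε * p ^ (n / 2)) * hcard

/-- Under Condition I with sign `ε`, the numbers
`N_1 = #{x : F(x) nonzero square}` and `N_{-1} = #{x : F(x) nonsquare}`
satisfy `N_1 = N_{-1} = (p^n - ε p^{n/2})(p^m - 1)/(2 p^m)`. -/
theorem count_square_values_condI
    (p n m d : ℕ) [Fact p.Prime] (hp : p ≠ 2)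
    (hm : 1 ≤ m) (hn : Even n) (hmn : 2 * m ≤ n)
    (V : Type*) [AddCommGroup V] [Module (ZMod p) V] [Fintype V]
    (hV : Fintype.card V = p ^ n)
    (K : Type*) [Field K] [Fintype K] [DecidableEq K] [Algebra (ZMod p) K]
    (hK : Fintype.card K = p ^ m)
    (B : V →ₗ[ZMod p] V →ₗ[ZMod p] ZMod p)
    (hBsym : ∀ v w, B v w = B w v)
    (hBnd : ∀ v, (∀ w, B v w = 0) → v = 0)
    (F Fstar : V → K)
    (ε : ℤ) (hε : ε = 1 ∨ ε = -1)
    (hd : 2 ≤ d) (hdeven : Even d)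
    (hgcd : Nat.gcd (d - 1) (p ^ m - 1) = 1)
    (hF0 : F 0 = 0) (hFstar0 : Fstar 0 = 0)
    (hFstarneg : ∀ a : V, Fstar (-a) = Fstar a)
    (hWalsh : ∀ c : K, c ≠ 0 → ∀ a : V,
      ∑ x : V, zetaP p (Algebra.trace (ZMod p) K (c * F x) - B a x)
        = (ε : ℂ) * (p : ℂ) ^ (n / 2)
            * zetaP p (Algebra.trace (ZMod p) K (c ^ ((1 : ℤ) - d) * Fstar a))) :
    (Finset.univ.filter (fun x : V => IsSquare (F x) ∧ F x ≠ 0)).card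
      = (Finset.univ.filter (fun x : V => ¬ IsSquare (F x))).card
    ∧ (2 * (p : ℤ) ^ m *
        ((Finset.univ.filter (fun x : V => IsSquare (F x) ∧ F x ≠ 0)).card : ℤ)
      = ((p : ℤ) ^ n - ε * (p : ℤ) ^ (n / 2)) * ((p : ℤ) ^ m - 1)) :=
  count_square_values_condI_general p n m d hp V hV K hK B F Fstar ε hFstar0 hWalsh
end

section
/- Let p be an odd prime and F: V → F_{p^m} a vectorial dual-bent function satisfying Condition I with sign ε. Let η_m be the quadratic character of F_{p^m} (with η_m(0) = 0), χ_1 the canonical additive character of V, and a ∈ V \ {0}. Then S_1 := Σ_{x ∈ V} η_m(F(x)) χ_1(ax) equals 0 if F^*(a) = 0, equals ε p^{n/2} if F^*(a) is a nonzero square in F_{p^m}, and equals −ε p^{n/2} if F^*(a) is a nonsquare. -/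
open Complex Finset

/-- Theorem (evaluation of `S_1`): let `F : V → F_{p^m}` be a vectorial
dual-bent function satisfying Condition I with sign `ε ∈ {±1}` (all component
functions `F_c(x) = Tr(c F(x))`, `c ≠ 0`, are weakly regular bent with
`W_{F_c}(a) = ε p^{n/2} ζ_p^{Tr(c^{1-d} F^*(a))}`, `gcd(d-1, p^m-1) = 1`,
`d` even, `F(0) = 0`, `F^*(-a) = F^*(a)`). Then for `a ≠ 0`,
`S_1 = Σ_{x ∈ V} η_m(F(x)) χ_1(ax)` equals `0` if `F^*(a) = 0`, `ε p^{n/2}` if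
`F^*(a)` is a nonzero square, and `-ε p^{n/2}` if `F^*(a)` is a nonsquare. -/
theorem hybrid_sum_S1_eval (p n m d : ℕ) [Fact p.Prime] (hp : p ≠ 2)
    (hm : 1 ≤ m) (hn : Even n) (hmn : 2 * m ≤ n)
    (V : Type*) [AddCommGroup V] [Module (ZMod p) V] [Fintype V]
    (hV : Fintype.card V = p ^ n)
    (K : Type*) [Field K] [Fintype K] [DecidableEq K] [Algebra (ZMod p) K]
    (hK : Fintype.card K = p ^ m)
    (B : V →ₗ[ZMod p] V →ₗ[ZMod p] ZMod p)
    (hBsym : ∀ v w, B v w = B w v)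
    (hBnd : ∀ v, (∀ w, B v w = 0) → v = 0)
    (F Fstar : V → K)
    (ε : ℤ) (hε : ε = 1 ∨ ε = -1)
    (hd : 2 ≤ d) (hdeven : Even d)
    (hgcd : Nat.gcd (d - 1) (p ^ m - 1) = 1)
    (hF0 : F 0 = 0) (hFstar0 : Fstar 0 = 0)
    (hFstarneg : ∀ a : V, Fstar (-a) = Fstar a)
    (hWalsh : ∀ c : K, c ≠ 0 → ∀ a : V,
      ∑ x : V, zetaP p (Algebra.trace (ZMod p) K (c * F x) - B a x)
        = (ε : ℂ) * (p : ℂ) ^ (n / 2)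
            * zetaP p (Algebra.trace (ZMod p) K (c ^ ((1 : ℤ) - d) * Fstar a)))
    (a : V) (ha : a ≠ 0) :
    (Fstar a = 0 →
      ∑ x : V, (quadraticChar K (F x) : ℂ) * zetaP p (B a x) = 0)
    ∧ (Fstar a ≠ 0 → IsSquare (Fstar a) →
      ∑ x : V, (quadraticChar K (F x) : ℂ) * zetaP p (B a x)
        = (ε : ℂ) * (p : ℂ) ^ (n / 2))
    ∧ (¬ IsSquare (Fstar a) →
      ∑ x : V, (quadraticChar K (F x) : ℂ) * zetaP p (B a x)
        = -(ε : ℂ) * (p : ℂ) ^ (n / 2)) := by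
  classical
  have hp0 : p ≠ 0 := (Fact.out : p.Prime).ne_zero
  have hp1 : 1 < p := (Fact.out : p.Prime).one_lt
  haveI : NeZero p := ⟨hp0⟩
  haveI : Fact (1 < p) := ⟨hp1⟩
  -- the primitive `p`-th root of unity
  set ζ : ℂ := Complex.exp (2 * Real.pi * Complex.I / p) with hζdef
  have hζ : IsPrimitiveRoot ζ p := Complex.isPrimitiveRoot_exp p hp0
  have hζp : ζ ^ p = 1 := hζ.pow_eq_one
  have hzeta : ∀ k : ZMod p, zetaP p k = ζ ^ k.val := by
    intro k
    rw [zetaP, hζdef, ← Complex.exp_nat_mul]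
    congr 1
    ring
  -- the canonical additive character of `ZMod p`
  set ψ0 : AddChar (ZMod p) ℂ := AddChar.zmodChar p hζp with hψ0def
  have hψ0 : ∀ k : ZMod p, ψ0 k = zetaP p k := by
    intro k
    rw [hzeta k, hψ0def, AddChar.zmodChar_apply]
  have zetaP_add : ∀ u v : ZMod p, zetaP p (u + v) = zetaP p u * zetaP p v := by
    intro u v
    rw [← hψ0, ← hψ0, ← hψ0, AddChar.map_add_eq_mul]
  -- characteristic facts
  haveI hcharK : CharP K p :=
    charP_of_injective_ringHom (algebraMap (ZMod p) K).injective p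
  have hrc : ringChar K = p := ringChar.eq K p
  -- trace surjectivity
  haveI : Module.Finite (ZMod p) K := Module.Finite.of_finite
  obtain ⟨y₁, hy₁⟩ := Algebra.trace_surjective (ZMod p) K 1
  -- the canonical additive character of `K`
  set ψ : AddChar K ℂ :=
    ψ0.compAddMonoidHom (Algebra.trace (ZMod p) K).toAddMonoidHom with hψdef
  have hψ_apply : ∀ y : K, ψ y = zetaP p (Algebra.trace (ZMod p) K y) := by
    intro y
    rw [hψdef, AddChar.compAddMonoidHom_apply, hψ0]
    rfl
  have hψne : ψ ≠ 1 := by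
    intro h
    have h1 : ψ y₁ = 1 := by rw [h]; rfl
    rw [hψ_apply, hy₁, hzeta, ZMod.val_one, pow_one] at h1
    exact hζ.ne_one hp1 h1
  have hψprim : ψ.IsPrimitive := AddChar.IsPrimitive.of_ne_one hψne
  -- the quadratic character, valued in `ℂ`
  set χ : MulChar K ℂ := (quadraticChar K).ringHomComp (Int.castRingHom ℂ) with hχdef
  have hχ_apply : ∀ y : K, χ y = ((quadraticChar K y : ℤ) : ℂ) := by
    intro y; rw [hχdef, MulChar.ringHomComp_apply]; rfl
  have hχne : χ ≠ 1 :=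
    (MulChar.ringHomComp_ne_one_iff Int.cast_injective).mpr
      (quadraticChar_ne_one (by rw [hrc]; exact hp))
  -- the Gauss sum
  set G : ℂ := gaussSum χ ψ with hGdef
  have hcard : ((Fintype.card K : ℂ)) ≠ 0 := by
    rw [hK]
    push_cast
    exact pow_ne_zero m (Nat.cast_ne_zero.mpr hp0)
  have hG0 : G ≠ 0 := gaussSum_ne_zero_of_nontrivial hcard hχne hψprim
  -- key identity : `∑ c, χ c ψ(c y) = χ y * G`
  have key : ∀ y : K, ∑ c : K, χ c * ψ (c * y) = χ y * G := by
    intro y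
    rcases eq_or_ne y 0 with rfl | hy
    · simp only [mul_zero, AddChar.map_zero_eq_one, mul_one]
      rw [χ.sum_eq_zero_of_ne_one hχne, MulChar.map_zero, zero_mul]
    · have h1 : χ ((Units.mk0 y hy : Kˣ) : K)
          * gaussSum χ (ψ.mulShift (Units.mk0 y hy)) = G :=
        gaussSum_mulShift χ ψ (Units.mk0 y hy)
      have h2 : gaussSum χ (ψ.mulShift (Units.mk0 y hy)) = ∑ c : K, χ c * ψ (c * y) := by
        unfold gaussSum
        apply sum_congr rfl
        intro c _
        rw [AddChar.mulShift_apply, Units.val_mk0, mul_comm y c]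
      have h3 : χ y * χ y = 1 := by
        rw [hχ_apply, ← Int.cast_mul, ← pow_two, quadraticChar_sq_one hy, Int.cast_one]
      rw [h2, Units.val_mk0] at h1
      rw [← one_mul (∑ c : K, χ c * ψ (c * y)), ← h3, mul_assoc, h1]
  -- exponent arithmetic
  set k : ℕ := d - 1 with hkdef
  have hk0 : k ≠ 0 := by omega
  have hkodd : Odd k := Nat.Even.sub_odd (by omega) hdeven odd_one
  have hzd : ∀ c : K, c ^ ((1 : ℤ) - d) = (c ^ k)⁻¹ := by
    intro c
    have h : ((1 : ℤ) - d) = -(k : ℤ) := by rw [hkdef]; omega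
    rw [h, zpow_neg, zpow_natCast]
  -- bijectivity of `c ↦ c^(1-d)`
  have hcop : (Nat.card Kˣ).Coprime k := by
    rw [Nat.card_eq_fintype_card, Fintype.card_units, hK]
    exact Nat.Coprime.symm hgcd
  have hinj : Function.Injective (fun c : K => c ^ ((1 : ℤ) - d)) := by
    intro c₁ c₂ h
    simp only [hzd] at h
    have h2 : c₁ ^ k = c₂ ^ k := inv_injective h
    rcases eq_or_ne c₁ 0 with rfl | h₁
    · rcases eq_or_ne c₂ 0 with rfl | h₂
      · rfl
      · rw [zero_pow hk0] at h2
        exact absurd ((pow_eq_zero_iff hk0).mp h2.symm) h₂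
    · rcases eq_or_ne c₂ 0 with rfl | h₂
      · rw [zero_pow hk0] at h2
        exact absurd ((pow_eq_zero_iff hk0).mp h2) h₁
      · have hu : (Units.mk0 c₁ h₁) ^ k = (Units.mk0 c₂ h₂) ^ k := by
          apply Units.ext
          rw [Units.val_pow_eq_pow_val, Units.val_pow_eq_pow_val]
          exact h2
        have h5 : Units.mk0 c₁ h₁ = Units.mk0 c₂ h₂ := (powCoprime hcop).injective hu
        simpa using congrArg Units.val h5
  have hbij : Function.Bijective (fun c : K => c ^ ((1 : ℤ) - d)) :=
    Finite.injective_iff_bijective.mp hinj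
  -- invariance of `χ` under `c ↦ c^(1-d)`
  have hqinv : ∀ x : K, x ≠ 0 → quadraticChar K x⁻¹ = quadraticChar K x := by
    intro x hx
    have h1 : quadraticChar K x * quadraticChar K x⁻¹ = 1 := by
      rw [← map_mul, mul_inv_cancel₀ hx, map_one]
    have h2 : quadraticChar K x * quadraticChar K x = 1 := by
      rw [← pow_two]; exact quadraticChar_sq_one hx
    have hne : quadraticChar K x ≠ 0 :=
      fun hq => hx (quadraticChar_eq_zero_iff.mp hq)
    exact mul_left_cancel₀ hne (h1.trans h2.symm)
  have hχe : ∀ c : K, χ (c ^ ((1 : ℤ) - d)) = χ c := by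
    intro c
    rcases eq_or_ne c 0 with rfl | hc
    · rw [hzd, zero_pow hk0, inv_zero]
    · rw [hzd, hχ_apply, hχ_apply]
      congr 1
      rw [hqinv _ (pow_ne_zero k hc), map_pow]
      rcases quadraticChar_dichotomy hc with h | h <;> rw [h]
      · exact one_pow k
      · exact hkodd.neg_one_pow
  -- the master identity
  set s : K := Fstar a with hsdef
  have hsum : G * (∑ x : V, χ (F x) * zetaP p (B a x))
      = G * ((ε : ℂ) * (p : ℂ) ^ (n / 2) * χ s) := by
    calc G * ∑ x : V, χ (F x) * zetaP p (B a x)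
        = ∑ x : V, (χ (F x) * G) * zetaP p (B a x) := by
          rw [Finset.mul_sum]
          apply sum_congr rfl
          intro x _
          ring
      _ = ∑ x : V, (∑ c : K, χ c * ψ (c * F x)) * zetaP p (B a x) := by
          apply sum_congr rfl
          intro x _
          rw [key (F x)]
      _ = ∑ c : K, χ c
            * ∑ x : V, zetaP p (Algebra.trace (ZMod p) K (c * F x) + B a x) := by
          simp_rw [Finset.sum_mul]
          rw [Finset.sum_comm]
          apply sum_congr rfl
          intro c _
          rw [Finset.mul_sum]
          apply sum_congr rfl
          intro x _
          rw [hψ_apply, zetaP_add, mul_assoc]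
      _ = ∑ c : K, χ c * ((ε : ℂ) * (p : ℂ) ^ (n / 2)
            * zetaP p (Algebra.trace (ZMod p) K (c ^ ((1 : ℤ) - d) * s))) := by
          apply sum_congr rfl
          intro c _
          rcases eq_or_ne c 0 with rfl | hc
          · rw [MulChar.map_zero, zero_mul, zero_mul]
          · congr 1
            have hw := hWalsh c hc (-a)
            rw [hFstarneg] at hw
            rw [← hsdef] at hw
            rw [← hw]
            apply sum_congr rfl
            intro x _
            congr 1
            rw [map_neg, LinearMap.neg_apply, sub_neg_eq_add]
      _ = (ε : ℂ) * (p : ℂ) ^ (n / 2)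
            * ∑ c : K, χ c * ψ (c ^ ((1 : ℤ) - d) * s) := by
          rw [Finset.mul_sum]
          apply sum_congr rfl
          intro c _
          rw [hψ_apply]
          ring
      _ = (ε : ℂ) * (p : ℂ) ^ (n / 2) * ∑ c : K, χ c * ψ (c * s) := by
          congr 1
          calc ∑ c : K, χ c * ψ (c ^ ((1 : ℤ) - d) * s)
              = ∑ c : K, χ (c ^ ((1 : ℤ) - d)) * ψ (c ^ ((1 : ℤ) - d) * s) := by
                apply sum_congr rfl
                intro c _
                rw [hχe]
            _ = ∑ u : K, χ u * ψ (u * s) :=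
                Fintype.sum_bijective _ hbij _ _ (fun c => rfl)
      _ = (ε : ℂ) * (p : ℂ) ^ (n / 2) * (χ s * G) := by rw [key s]
      _ = G * ((ε : ℂ) * (p : ℂ) ^ (n / 2) * χ s) := by ring
  have master : ∑ x : V, (quadraticChar K (F x) : ℂ) * zetaP p (B a x)
      = (ε : ℂ) * (p : ℂ) ^ (n / 2) * ((quadraticChar K s : ℤ) : ℂ) := by
    have hS : ∑ x : V, (quadraticChar K (F x) : ℂ) * zetaP p (B a x)
        = ∑ x : V, χ (F x) * zetaP p (B a x) := by
      apply sum_congr rfl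
      intro x _
      rw [hχ_apply]
    rw [hS, ← hχ_apply]
    exact mul_left_cancel₀ hG0 hsum
  refine ⟨?_, ?_, ?_⟩
  · intro h0
    rw [master, h0, quadraticChar_zero, Int.cast_zero, mul_zero]
  · intro hne hsq
    rw [master, (quadraticChar_one_iff_isSquare hne).mpr hsq, Int.cast_one, mul_one]
  · intro hnsq
    rw [master, quadraticChar_neg_one_iff_not_isSquare.mpr hnsq]
    push_cast
    ring
end

section
/- Let p be an odd prime and F: V → F_{p^m} a vectorial dual-bent function satisfying Condition I with sign ε. Let χ_1 be the canonical additive character of V and a ∈ V \ {0}. Then T := Σ_{x ∈ V, F(x)=0} χ_1(ax) equals ((p^m−1)/p^m) ε p^{n/2} if F^*(a) = 0 and equals −ε p^{n/2}/p^m if F^*(a) ≠ 0. -/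
open Complex Finset

section aux

variable (p : ℕ) [Fact p.Prime]

lemma zetaP_eq (k : ZMod p) :
    zetaP p k = Complex.exp (2 * Real.pi * Complex.I / p) ^ k.val := by
  rw [zetaP, ← Complex.exp_nat_mul]; ring_nf

lemma zetaP_prim : IsPrimitiveRoot (Complex.exp (2 * Real.pi * Complex.I / p)) p :=
  Complex.isPrimitiveRoot_exp p (Nat.Prime.ne_zero Fact.out)

lemma zetaP_zero : zetaP p 0 = 1 := by simp [zetaP_eq]

lemma zetaP_pow_mod (j : ℕ) :
    Complex.exp (2 * Real.pi * Complex.I / p) ^ j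
      = Complex.exp (2 * Real.pi * Complex.I / p) ^ (j % p) := by
  conv_lhs => rw [← Nat.div_add_mod j p]
  rw [pow_add, pow_mul, (zetaP_prim p).pow_eq_one, one_pow, one_mul]

lemma zetaP_add (j k : ZMod p) : zetaP p (j + k) = zetaP p j * zetaP p k := by
  rw [zetaP_eq, zetaP_eq, zetaP_eq, ← pow_add, ZMod.val_add, ← zetaP_pow_mod]

lemma zetaP_ne_one {k : ZMod p} (hk : k ≠ 0) : zetaP p k ≠ 1 := by
  rw [zetaP_eq]
  intro h
  have hd := ((zetaP_prim p).pow_eq_one_iff_dvd k.val).mp h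
  have h0 : k.val = 0 := Nat.eq_zero_of_dvd_of_lt hd (ZMod.val_lt k)
  exact hk (by rwa [ZMod.val_eq_zero] at h0)

/-- The sum of a nontrivial character over a finite abelian group is zero. -/
lemma sum_zetaP_eq_zero {G : Type*} [AddCommGroup G] [Fintype G]
    (f : G → ZMod p) (hadd : ∀ x y, f (x + y) = f x + f y)
    (hne : ∃ g, f g ≠ 0) :
    ∑ x : G, zetaP p (f x) = 0 := by
  obtain ⟨g, hg⟩ := hne
  have key : ∑ x : G, zetaP p (f x) = zetaP p (f g) * ∑ x : G, zetaP p (f x) := by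
    rw [Finset.mul_sum]
    calc ∑ x : G, zetaP p (f x)
        = ∑ x : G, zetaP p (f ((Equiv.addLeft g) x)) :=
          (Equiv.sum_comp (Equiv.addLeft g) (fun x => zetaP p (f x))).symm
      _ = ∑ x : G, zetaP p (f g) * zetaP p (f x) := by
          refine Finset.sum_congr rfl fun x _ => ?_
          simp only [Equiv.coe_addLeft]
          rw [hadd, zetaP_add]
  have h2 : (zetaP p (f g) - 1) * ∑ x : G, zetaP p (f x) = 0 := by
    linear_combination -key
  rcases mul_eq_zero.mp h2 with h | h
  · exact absurd (sub_eq_zero.mp h) (zetaP_ne_one p hg)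
  · exact h

variable (m : ℕ) (K : Type*) [Field K] [Fintype K] [DecidableEq K] [Algebra (ZMod p) K]

lemma sum_K (hK : Fintype.card K = p ^ m) (y : K) :
    ∑ c : K, zetaP p (Algebra.trace (ZMod p) K (c * y))
      = if y = 0 then ((p : ℂ) ^ m) else 0 := by
  split_ifs with hy
  · subst hy
    simp only [mul_zero, map_zero, zetaP_zero]
    rw [Finset.sum_const, Finset.card_univ, hK]
    push_cast; ring
  · have : FiniteDimensional (ZMod p) K := Module.finite_iff_finite.mpr inferInstance
    obtain ⟨c', hc'⟩ := Algebra.trace_surjective (ZMod p) K 1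
    refine sum_zetaP_eq_zero p _ (fun x y' => by rw [add_mul, map_add]) ?_
    exact ⟨c' * y⁻¹, by rw [mul_assoc, inv_mul_cancel₀ hy, mul_one, hc']; exact one_ne_zero⟩

/-- Reindex a sum over nonzero elements via units. -/
lemma sum_units {M : Type*} [AddCommMonoid M] (g : K → M) :
    ∑ c ∈ Finset.univ.filter (fun c : K => c ≠ 0), g c = ∑ u : Kˣ, g u := by
  refine (Finset.sum_nbij' (fun u : Kˣ => (u : K))
    (fun c => if h : c = 0 then 1 else Units.mk0 c h) ?_ ?_ ?_ ?_ ?_).symm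
  · intro u _; simp [Units.ne_zero u]
  · intro c _; simp
  · intro u _
    simp [Units.ne_zero u]
  · intro c hc
    simp only [Finset.mem_filter] at hc
    simp [hc.2]
  · intro u _; rfl

lemma sum_pow_units (d : ℕ) (hd : 1 ≤ d)
    (hK : Fintype.card K = p ^ m)
    (hgcd : Nat.gcd (d - 1) (p ^ m - 1) = 1) (g : K → ℂ) :
    ∑ u : Kˣ, g ((u : K) ^ ((1 : ℤ) - d)) = ∑ u : Kˣ, g u := by
  have hcard : Nat.card Kˣ = p ^ m - 1 := by
    rw [Nat.card_eq_fintype_card, Fintype.card_units, hK]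
  have hcop : (Nat.card Kˣ).Coprime (d - 1) := by
    rw [hcard, Nat.Coprime, Nat.gcd_comm]; exact hgcd
  have he : ∀ u : Kˣ, ((u : K) ^ ((1 : ℤ) - d)) = ((((powCoprime hcop) u)⁻¹ : Kˣ) : K) := by
    intro u
    have h1 : (1 : ℤ) - d = -(d - 1 : ℕ) := by push_cast [Nat.cast_sub hd]; ring
    rw [h1, zpow_neg, zpow_natCast]
    simp [powCoprime]
  calc ∑ u : Kˣ, g ((u : K) ^ ((1 : ℤ) - d))
      = ∑ u : Kˣ, g ((((powCoprime hcop).trans (Equiv.inv Kˣ)) u : Kˣ) : K) := by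
        refine Finset.sum_congr rfl fun u _ => ?_
        rw [he u]; rfl
    _ = ∑ u : Kˣ, g u :=
        Equiv.sum_comp ((powCoprime hcop).trans (Equiv.inv Kˣ)) (fun v : Kˣ => g (v : K))

end aux

/-- Under Condition I with sign `ε`, for `a ≠ 0` the sum
`T = Σ_{x ∈ V, F(x)=0} χ_1(ax)` equals `((p^m-1)/p^m) ε p^{n/2}` if
`F^*(a) = 0` and `-ε p^{n/2}/p^m` if `F^*(a) ≠ 0`. -/
theorem sum_over_zeros_condI
    (p n m d : ℕ) [Fact p.Prime] (hp : p ≠ 2)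
    (hm : 1 ≤ m) (hn : Even n) (hmn : 2 * m ≤ n)
    (V : Type*) [AddCommGroup V] [Module (ZMod p) V] [Fintype V]
    (hV : Fintype.card V = p ^ n)
    (K : Type*) [Field K] [Fintype K] [DecidableEq K] [Algebra (ZMod p) K]
    (hK : Fintype.card K = p ^ m)
    (B : V →ₗ[ZMod p] V →ₗ[ZMod p] ZMod p)
    (hBsym : ∀ v w, B v w = B w v)
    (hBnd : ∀ v, (∀ w, B v w = 0) → v = 0)
    (F Fstar : V → K)
    (ε : ℤ) (hε : ε = 1 ∨ ε = -1)
    (hd : 2 ≤ d) (hdeven : Even d)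
    (hgcd : Nat.gcd (d - 1) (p ^ m - 1) = 1)
    (hF0 : F 0 = 0) (hFstar0 : Fstar 0 = 0)
    (hFstarneg : ∀ a : V, Fstar (-a) = Fstar a)
    (hWalsh : ∀ c : K, c ≠ 0 → ∀ a : V,
      ∑ x : V, zetaP p (Algebra.trace (ZMod p) K (c * F x) - B a x)
        = (ε : ℂ) * (p : ℂ) ^ (n / 2)
            * zetaP p (Algebra.trace (ZMod p) K (c ^ ((1 : ℤ) - d) * Fstar a)))
    (a : V) (ha : a ≠ 0) :
    (Fstar a = 0 →
      ∑ x ∈ Finset.univ.filter (fun x : V => F x = 0), zetaP p (B a x)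
        = (((p : ℂ) ^ m - 1) / (p : ℂ) ^ m) * (ε : ℂ) * (p : ℂ) ^ (n / 2))
    ∧ (Fstar a ≠ 0 →
      ∑ x ∈ Finset.univ.filter (fun x : V => F x = 0), zetaP p (B a x)
        = -((ε : ℂ) * (p : ℂ) ^ (n / 2)) / (p : ℂ) ^ m) := by
  have hp0 : (p : ℂ) ≠ 0 := Nat.cast_ne_zero.mpr (Nat.Prime.ne_zero Fact.out)
  have hpm0 : (p : ℂ) ^ m ≠ 0 := pow_ne_zero m hp0
  set S : ℂ := ∑ x ∈ Finset.univ.filter (fun x : V => F x = 0), zetaP p (B a x) with hS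
  set A : ℂ := ∑ c : K, ∑ x : V, zetaP p (Algebra.trace (ZMod p) K (c * F x) + B a x)
    with hA
  -- Step 1 : A = p^m * S
  have step1 : A = (p : ℂ) ^ m * S := by
    rw [hA, Finset.sum_comm]
    have inner : ∀ x : V,
        ∑ c : K, zetaP p (Algebra.trace (ZMod p) K (c * F x) + B a x)
          = (if F x = 0 then ((p : ℂ) ^ m) else 0) * zetaP p (B a x) := by
      intro x
      rw [← sum_K p m K hK (F x), Finset.sum_mul]
      exact Finset.sum_congr rfl fun c _ => zetaP_add p _ _
    calc ∑ x : V, ∑ c : K, zetaP p (Algebra.trace (ZMod p) K (c * F x) + B a x)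
        = ∑ x : V, (if F x = 0 then ((p : ℂ) ^ m) else 0) * zetaP p (B a x) :=
          Finset.sum_congr rfl fun x _ => inner x
      _ = ∑ x : V, (if F x = 0 then ((p : ℂ) ^ m) * zetaP p (B a x) else 0) := by
          refine Finset.sum_congr rfl fun x _ => ?_
          split_ifs <;> simp
      _ = ∑ x ∈ Finset.univ.filter (fun x : V => F x = 0),
            ((p : ℂ) ^ m) * zetaP p (B a x) := (Finset.sum_filter _ _).symm
      _ = (p : ℂ) ^ m * S := by rw [hS, Finset.mul_sum]
  -- Step 2 : evaluate A by splitting off c = 0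
  have hzero : ∑ x : V, zetaP p (B a x) = 0 := by
    refine sum_zetaP_eq_zero p (fun x => B a x) (fun x y => map_add (B a) x y) ?_
    by_contra hcon
    push_neg at hcon
    exact ha (hBnd a hcon)
  have hsplit : A = (∑ x : V, zetaP p (Algebra.trace (ZMod p) K ((0 : K) * F x) + B a x))
      + ∑ c ∈ Finset.univ.filter (fun c : K => c ≠ 0),
          ∑ x : V, zetaP p (Algebra.trace (ZMod p) K (c * F x) + B a x) := by
    rw [hA, ← Finset.sum_filter_add_sum_filter_not Finset.univ (fun c : K => c = 0)]
    congr 1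
    · rw [Finset.filter_eq' Finset.univ (0 : K), if_pos (Finset.mem_univ 0),
        Finset.sum_singleton]
  have hzeroterm : (∑ x : V, zetaP p (Algebra.trace (ZMod p) K ((0 : K) * F x) + B a x))
      = 0 := by
    calc (∑ x : V, zetaP p (Algebra.trace (ZMod p) K ((0 : K) * F x) + B a x))
        = ∑ x : V, zetaP p (B a x) := by
          refine Finset.sum_congr rfl fun x _ => ?_
          rw [zero_mul, map_zero, zero_add]
      _ = 0 := hzero
  have hwalsh' : ∀ c : K, c ≠ 0 →
      ∑ x : V, zetaP p (Algebra.trace (ZMod p) K (c * F x) + B a x)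
        = (ε : ℂ) * (p : ℂ) ^ (n / 2)
            * zetaP p (Algebra.trace (ZMod p) K (c ^ ((1 : ℤ) - d) * Fstar a)) := by
    intro c hc
    have := hWalsh c hc (-a)
    rw [hFstarneg a] at this
    rw [← this]
    refine Finset.sum_congr rfl fun x _ => ?_
    congr 1
    rw [map_neg B a, LinearMap.neg_apply, sub_neg_eq_add]
  have hpowsum : ∑ c ∈ Finset.univ.filter (fun c : K => c ≠ 0),
      zetaP p (Algebra.trace (ZMod p) K (c ^ ((1 : ℤ) - d) * Fstar a))
        = (if Fstar a = 0 then ((p : ℂ) ^ m) else 0) - 1 := by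
    rw [sum_units K
      (fun c => zetaP p (Algebra.trace (ZMod p) K (c ^ ((1 : ℤ) - d) * Fstar a)))]
    rw [sum_pow_units p m K d (by omega) hK hgcd
      (fun c => zetaP p (Algebra.trace (ZMod p) K (c * Fstar a)))]
    rw [← sum_units K (fun c => zetaP p (Algebra.trace (ZMod p) K (c * Fstar a)))]
    have htot := sum_K p m K hK (Fstar a)
    rw [← Finset.sum_filter_add_sum_filter_not Finset.univ (fun c : K => c = 0)] at htot
    rw [Finset.filter_eq' Finset.univ (0 : K), if_pos (Finset.mem_univ 0),
      Finset.sum_singleton, zero_mul, map_zero, zetaP_zero] at htot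
    linear_combination htot
  have step2 : A = (ε : ℂ) * (p : ℂ) ^ (n / 2)
      * ((if Fstar a = 0 then ((p : ℂ) ^ m) else 0) - 1) := by
    rw [hsplit, hzeroterm, zero_add, ← hpowsum, Finset.mul_sum]
    exact Finset.sum_congr rfl fun c hc =>
      hwalsh' c (by simpa using (Finset.mem_filter.mp hc).2)
  have main : (p : ℂ) ^ m * S = (ε : ℂ) * (p : ℂ) ^ (n / 2)
      * ((if Fstar a = 0 then ((p : ℂ) ^ m) else 0) - 1) := by
    rw [← step1, step2]
  constructor
  · intro h0
    rw [if_pos h0] at main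
    field_simp
    linear_combination main
  · intro h0
    rw [if_neg h0] at main
    field_simp
    linear_combination main
end

section
/- Let p be an odd prime, m, n positive integers with m ≤ n/2, ε ∈ {±1}, N = p^n, and K = (p^n − ε p^{n/2})(p^m − 1)/(2 p^m). Then the ratio of I_max := (p^m + 1) p^{n/2} / (2 p^m K) to the Welch bound I_W := sqrt((N − K)/(K(N − 1))) satisfies I_max / I_W < sqrt(1 / (1 − 2/p^m)). In particular the ratio tends to 1 as p^m → ∞. -/
set_option maxHeartbeats 1000000 in

lemma key (Q S : ℝ) (hQ : 3 ≤ Q) (hS : Q ≤ S) (ε : ℝ) (hε : ε = 1 ∨ ε = -1) :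
    ((Q + 1) * S / (2 * Q * ((S ^ 2 - ε * S) * (Q - 1) / (2 * Q)))) /
      Real.sqrt ((S ^ 2 - (S ^ 2 - ε * S) * (Q - 1) / (2 * Q)) /
        ((S ^ 2 - ε * S) * (Q - 1) / (2 * Q) * (S ^ 2 - 1))) <
      Real.sqrt (1 / (1 - 2 / Q)) := by
  have hQ0 : (0:ℝ) < Q := by linarith
  have hS3 : (3:ℝ) ≤ S := le_trans hQ hS
  have hεS : S - ε ≥ 2 := by rcases hε with h | h <;> simp [h] <;> linarith
  have hK : 0 < (S ^ 2 - ε * S) * (Q - 1) / (2 * Q) := by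
    apply div_pos _ (by linarith)
    have h1 : S ^ 2 - ε * S = S * (S - ε) := by ring
    rw [h1]
    exact mul_pos (mul_pos (by linarith) (by linarith)) (by linarith)
  have hNK : 0 < S ^ 2 - (S ^ 2 - ε * S) * (Q - 1) / (2 * Q) := by
    rw [sub_pos, div_lt_iff₀ (by linarith : (0:ℝ) < 2 * Q)]
    rcases hε with h | h <;> subst h <;> nlinarith
  have hB : 0 < (S ^ 2 - (S ^ 2 - ε * S) * (Q - 1) / (2 * Q)) /
      ((S ^ 2 - ε * S) * (Q - 1) / (2 * Q) * (S ^ 2 - 1)) := by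
    apply div_pos hNK
    apply mul_pos hK
    nlinarith
  rw [Real.lt_sqrt (by positivity)]
  rw [div_pow, Real.sq_sqrt hB.le]
  have hc : 0 < 1 - 2 / Q := by
    rw [sub_pos, div_lt_iff₀ hQ0]; linarith
  rw [div_lt_div_iff₀ hB (by positivity)]
  rcases hε with h | h <;> subst h
  · have hW : 0 < (S ^ 2 - 1 * S) * (Q - 1) := by nlinarith
    have e1 : ((Q + 1) * S / (2 * Q * ((S ^ 2 - 1 * S) * (Q - 1) / (2 * Q)))) ^ 2 * (1 - 2 / Q)
        = (Q + 1) ^ 2 * S ^ 2 * (Q - 2) / (((S ^ 2 - 1 * S) * (Q - 1)) ^ 2 * Q) := by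
      field_simp
    have e2 : 1 * ((S ^ 2 - (S ^ 2 - 1 * S) * (Q - 1) / (2 * Q)) /
          ((S ^ 2 - 1 * S) * (Q - 1) / (2 * Q) * (S ^ 2 - 1)))
        = (2 * Q * S ^ 2 - (S ^ 2 - 1 * S) * (Q - 1)) / ((S ^ 2 - 1 * S) * (Q - 1) * (S ^ 2 - 1)) := by
      field_simp
    rw [e1, e2, div_lt_div_iff₀ (mul_pos (pow_pos hW 2) hQ0) (mul_pos hW (by nlinarith))]
    nlinarith [mul_pos (mul_pos hW (pow_pos (show (0:ℝ) < S by linarith) 2))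
      (mul_pos (show (0:ℝ) < S - 1 by linarith)
        (show (0:ℝ) < (Q + 1) * S - Q ^ 2 + 2 * Q + 1 by nlinarith))]
  · have hW : 0 < (S ^ 2 - -1 * S) * (Q - 1) := by nlinarith
    have e1 : ((Q + 1) * S / (2 * Q * ((S ^ 2 - -1 * S) * (Q - 1) / (2 * Q)))) ^ 2 * (1 - 2 / Q)
        = (Q + 1) ^ 2 * S ^ 2 * (Q - 2) / (((S ^ 2 - -1 * S) * (Q - 1)) ^ 2 * Q) := by
      field_simp
    have e2 : 1 * ((S ^ 2 - (S ^ 2 - -1 * S) * (Q - 1) / (2 * Q)) /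
          ((S ^ 2 - -1 * S) * (Q - 1) / (2 * Q) * (S ^ 2 - 1)))
        = (2 * Q * S ^ 2 - (S ^ 2 - -1 * S) * (Q - 1)) / ((S ^ 2 - -1 * S) * (Q - 1) * (S ^ 2 - 1)) := by
      field_simp
    rw [e1, e2, div_lt_div_iff₀ (mul_pos (pow_pos hW 2) hQ0) (mul_pos hW (by nlinarith))]
    nlinarith [mul_pos (mul_pos hW (pow_pos (show (0:ℝ) < S by linarith) 2))
      (mul_pos (show (0:ℝ) < S + 1 by linarith)
        (show (0:ℝ) < (Q + 1) * S + Q ^ 2 - 2 * Q - 1 by nlinarith))]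
/-- Asymptotic optimality estimate for the codebook `C_D`: with
`N = p^n`, `K = (p^n - ε p^{n/2})(p^m - 1)/(2 p^m)`,
`I_max = (p^m + 1) p^{n/2}/(2 p^m K)` and the Welch bound
`I_W = sqrt((N - K)/(K(N - 1)))`, one has
`I_max / I_W < sqrt(1/(1 - 2/p^m))`. -/
theorem codebook_ratio_lt (p n m : ℕ) (hp : p.Prime) (hodd : Odd p)
    (hm : 1 ≤ m) (hn : Even n) (hmn : m ≤ n / 2) (ε : ℝ)
    (hε : ε = 1 ∨ ε = -1) :
    (((p : ℝ) ^ m + 1) * (p : ℝ) ^ (n / 2) /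
        (2 * (p : ℝ) ^ m *
          (((p : ℝ) ^ n - ε * (p : ℝ) ^ (n / 2)) * ((p : ℝ) ^ m - 1) /
            (2 * (p : ℝ) ^ m)))) /
      Real.sqrt
        (((p : ℝ) ^ n -
            ((p : ℝ) ^ n - ε * (p : ℝ) ^ (n / 2)) * ((p : ℝ) ^ m - 1) /
              (2 * (p : ℝ) ^ m)) /
          ((((p : ℝ) ^ n - ε * (p : ℝ) ^ (n / 2)) * ((p : ℝ) ^ m - 1) /
              (2 * (p : ℝ) ^ m)) * ((p : ℝ) ^ n - 1)))
      < Real.sqrt (1 / (1 - 2 / (p : ℝ) ^ m)) := by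
  have hp3 : 3 ≤ p := by
    rcases hodd with ⟨k, hk⟩
    have := hp.two_le
    omega
  have hp3' : (3:ℝ) ≤ (p:ℝ) := by exact_mod_cast hp3
  have hQ : (3:ℝ) ≤ (p:ℝ) ^ m := by
    calc (3:ℝ) ≤ (p:ℝ) := hp3'
    _ = (p:ℝ) ^ 1 := (pow_one _).symm
    _ ≤ (p:ℝ) ^ m := pow_le_pow_right₀ (by linarith) hm
  have hS : (p:ℝ) ^ m ≤ (p:ℝ) ^ (n / 2) := pow_le_pow_right₀ (by linarith) hmn
  have hn2 : (p:ℝ) ^ n = ((p:ℝ) ^ (n / 2)) ^ 2 := by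
    rw [← pow_mul]
    congr 1
    obtain ⟨k, hk⟩ := hn
    omega
  rw [hn2]
  exact key _ _ hQ hS ε hε
end
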